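/- arXiv:1812.07600 — 3 statements merged into one kernel-verified Lean document; each statement's English description precedes it below -/
import Mathlib

section
/- In a cubical set with connections, the submodule Con_n(K) of the non-degenerate chain complex generated by cosets of connection cubes Γ_i^β(τ) is closed under the boundary operator: ∂_{n+1}(Con_{n+1}(K)) ⊆ Con_n(K). Hence Con(K) is a chain subcomplex of C(K). -/
structure PrecubicalConn where
  K : ℕ → Type*
  face : Bool → ∀ n : ℕ, ℕ → K (n + 1) → K n
  degen : ∀ n : ℕ, ℕ → K n → K (n + 1)
  conn : Bool → ∀ n : ℕ, ℕ → K n → K (n + 1)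

/-- The axioms of a cubical set with connections (`true` stands for `+`, `false` for `-`;
indices are 1-based with explicit range guards). -/
structure CubicalConnAxioms (P : PrecubicalConn) : Prop where
  face_face : ∀ (α β : Bool) (n i j : ℕ) (σ : P.K (n + 2)), 1 ≤ i → i < j → j ≤ n + 2 →
    P.face α n i (P.face β (n + 1) j σ) = P.face β n (j - 1) (P.face α (n + 1) i σ)
  degen_degen : ∀ (n i j : ℕ) (σ : P.K n), 1 ≤ i → i ≤ j → j ≤ n + 1 →
    P.degen (n + 1) i (P.degen n j σ) = P.degen (n + 1) (j + 1) (P.degen n i σ)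
  face_degen_lt : ∀ (α : Bool) (n i j : ℕ) (σ : P.K (n + 1)), 1 ≤ i → i < j → j ≤ n + 2 →
    P.face α (n + 1) i (P.degen (n + 1) j σ) = P.degen n (j - 1) (P.face α n i σ)
  face_degen_gt : ∀ (α : Bool) (n i j : ℕ) (σ : P.K (n + 1)), 1 ≤ j → j < i → i ≤ n + 2 →
    P.face α (n + 1) i (P.degen (n + 1) j σ) = P.degen n j (P.face α n (i - 1) σ)
  face_degen_eq : ∀ (α : Bool) (n i : ℕ) (σ : P.K n), 1 ≤ i → i ≤ n + 1 →
    P.face α n i (P.degen n i σ) = σ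
  conn_conn : ∀ (α β : Bool) (n i j : ℕ) (σ : P.K n), 1 ≤ i → i ≤ j → j ≤ n →
    P.conn α (n + 1) i (P.conn β n j σ) = P.conn β (n + 1) (j + 1) (P.conn α n i σ)
  conn_degen_lt : ∀ (α : Bool) (n i j : ℕ) (σ : P.K n), 1 ≤ i → i < j → j ≤ n + 1 →
    P.conn α (n + 1) i (P.degen n j σ) = P.degen (n + 1) (j + 1) (P.conn α n i σ)
  conn_degen_gt : ∀ (α : Bool) (n i j : ℕ) (σ : P.K n), 1 ≤ j → j < i → i ≤ n + 1 →
    P.conn α (n + 1) i (P.degen n j σ) = P.degen (n + 1) j (P.conn α n (i - 1) σ)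
  conn_degen_eq : ∀ (α : Bool) (n i : ℕ) (σ : P.K n), 1 ≤ i → i ≤ n + 1 →
    P.conn α (n + 1) i (P.degen n i σ) = P.degen (n + 1) (i + 1) (P.degen n i σ)
  face_conn_lt : ∀ (α β : Bool) (n i j : ℕ) (σ : P.K (n + 1)), 1 ≤ i → i < j → j ≤ n + 1 →
    P.face α (n + 1) i (P.conn β (n + 1) j σ) = P.conn β n (j - 1) (P.face α n i σ)
  face_conn_gt : ∀ (α β : Bool) (n i j : ℕ) (σ : P.K (n + 1)), 1 ≤ j → j + 1 < i → i ≤ n + 2 →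
    P.face α (n + 1) i (P.conn β (n + 1) j σ) = P.conn β n j (P.face α n (i - 1) σ)
  face_conn_self : ∀ (β : Bool) (n i j : ℕ) (σ : P.K n), 1 ≤ j → j ≤ n → (i = j ∨ i = j + 1) →
    P.face β n i (P.conn β n j σ) = σ
  face_conn_opp : ∀ (α β : Bool) (n i j : ℕ) (σ : P.K (n + 1)), 1 ≤ j → j ≤ n + 1 →
    (i = j ∨ i = j + 1) → α ≠ β →
    P.face α (n + 1) i (P.conn β (n + 1) j σ) = P.degen n j (P.face α n j σ)

/-- A cube is degenerate if it is of the form `ε_i f_i^+ σ`. -/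
def PrecubicalConn.Degenerate (P : PrecubicalConn) : ∀ {n : ℕ}, P.K n → Prop :=
  fun {n} σ =>
    match n, σ with
    | 0, _ => False
    | m + 1, σ => ∃ i : ℕ, 1 ≤ i ∧ i ≤ m + 1 ∧ σ = P.degen m i (P.face true m i σ)

/-- A cube is a connection if it lies in the image of some `Γ_i^β`. -/
def PrecubicalConn.IsConn (P : PrecubicalConn) : ∀ {n : ℕ}, P.K n → Prop :=
  fun {n} σ =>
    match n, σ with
    | 0, _ => False
    | m + 1, σ => ∃ (β : Bool) (i : ℕ) (τ : P.K m), 1 ≤ i ∧ i ≤ m ∧ σ = P.conn β m i τ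

/-- The linear extension of the face map `f_i^α` to the free `R`-module on the cubes. -/
noncomputable def Fmap (P : PrecubicalConn) (R : Type*) [CommRing R] (α : Bool) (n i : ℕ) :
    (P.K (n + 1) →₀ R) →ₗ[R] (P.K n →₀ R) :=
  Finsupp.lmapDomain R R (P.face α n i)

/-- The linear extension of the connection map `Γ_i^β` to the free `R`-module on the cubes. -/
noncomputable def Gmap (P : PrecubicalConn) (R : Type*) [CommRing R] (β : Bool) (n i : ℕ) :
    (P.K n →₀ R) →ₗ[R] (P.K (n + 1) →₀ R) :=
  Finsupp.lmapDomain R R (P.conn β n i)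

/-- The cubical boundary operator `∂ σ = ∑_{i=1}^{n+1} (-1)^i (f_i^- σ - f_i^+ σ)`. -/
noncomputable def bdry (P : PrecubicalConn) (R : Type*) [CommRing R] (n : ℕ) :
    (P.K (n + 1) →₀ R) →ₗ[R] (P.K n →₀ R) :=
  ∑ i ∈ Finset.Icc 1 (n + 1), ((-1 : R) ^ i) • (Fmap P R false n i - Fmap P R true n i)

/-- The submodule generated by the degenerate cubes. -/
noncomputable def degenSub (P : PrecubicalConn) (R : Type*) [CommRing R] (n : ℕ) :
    Submodule R (P.K n →₀ R) :=
  Submodule.span R {x | ∃ σ : P.K n, P.Degenerate σ ∧ x = Finsupp.single σ 1}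

/-- The submodule generated by the connection cubes. -/
noncomputable def connSub (P : PrecubicalConn) (R : Type*) [CommRing R] (n : ℕ) :
    Submodule R (P.K n →₀ R) :=
  Submodule.span R {x | ∃ σ : P.K n, P.IsConn σ ∧ x = Finsupp.single σ 1}

/-- The sign `±1` associated to `β ∈ {+,-}`. -/
def sgn (R : Type*) [CommRing R] (β : Bool) : R := if β then 1 else -1

/-! In `∂ Γ_i^β τ` the faces with indices `i` and `i + 1` coincide (both are `τ` or both are
`ε_i f_i^{-β} τ`) and carry opposite signs, so they cancel; every other face is again a
connection. Likewise, in `∂ ε_i ρ` the two `i`-th faces are both `ρ` and cancel, and every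
other face is degenerate. -/

lemma sum_mem_of_sum_subset_eq_zero {ι M S : Type*} [AddCommMonoid M] [SetLike S M]
    [AddSubmonoidClass S M] {p : S} {s t : Finset ι} {g : ι → M} (hts : t ⊆ s)
    (ht : ∑ j ∈ t, g j = 0) (hg : ∀ j ∈ s, j ∉ t → g j ∈ p) :
    ∑ j ∈ s, g j ∈ p := by
  classical
  rw [← Finset.sum_sdiff hts, ht, add_zero]
  exact sum_mem fun j hj => hg j (Finset.mem_sdiff.1 hj).1 (Finset.mem_sdiff.1 hj).2

namespace CubicalConnAxioms

variable {P : PrecubicalConn}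

theorem face_conn_eq_face_succ_conn (hP : CubicalConnAxioms P) (α β : Bool) {m i : ℕ}
    (τ : P.K (m + 1)) (hi : 1 ≤ i) (him : i ≤ m + 1) :
    P.face α (m + 1) i (P.conn β (m + 1) i τ) =
      P.face α (m + 1) (i + 1) (P.conn β (m + 1) i τ) := by
  by_cases hαβ : α = β
  · subst hαβ
    rw [hP.face_conn_self α (m + 1) i i τ hi him (Or.inl rfl),
      hP.face_conn_self α (m + 1) (i + 1) i τ hi him (Or.inr rfl)]
  · rw [hP.face_conn_opp α β m i i τ hi him (Or.inl rfl) hαβ,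
      hP.face_conn_opp α β m (i + 1) i τ hi him (Or.inr rfl) hαβ]

theorem isConn_face_conn (hP : CubicalConnAxioms P) (α β : Bool) {m i j : ℕ}
    (τ : P.K (m + 1)) (hi : 1 ≤ i) (him : i ≤ m + 1) (hj : 1 ≤ j) (hjm : j ≤ m + 2)
    (hji : j ≠ i) (hji' : j ≠ i + 1) :
    P.IsConn (P.face α (m + 1) j (P.conn β (m + 1) i τ)) := by
  rcases Nat.lt_or_gt_of_ne hji with hlt | hgt
  · rw [hP.face_conn_lt α β m j i τ hj hlt him]
    exact ⟨β, i - 1, P.face α m j τ, by omega, by omega, rfl⟩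
  · rw [hP.face_conn_gt α β m j i τ hi (by omega) hjm]
    exact ⟨β, i, P.face α m (j - 1) τ, hi, by omega, rfl⟩

theorem degenerate_degen (hP : CubicalConnAxioms P) {m i : ℕ} (ρ : P.K m) (hi : 1 ≤ i)
    (him : i ≤ m + 1) : P.Degenerate (P.degen m i ρ) :=
  ⟨i, hi, him, by rw [hP.face_degen_eq true m i ρ hi him]⟩

theorem degenerate_face_degen (hP : CubicalConnAxioms P) (α : Bool) {m i j : ℕ}
    (ρ : P.K (m + 1)) (hi : 1 ≤ i) (him : i ≤ m + 2) (hj : 1 ≤ j) (hjm : j ≤ m + 2)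
    (hji : j ≠ i) : P.Degenerate (P.face α (m + 1) j (P.degen (m + 1) i ρ)) := by
  rcases Nat.lt_or_gt_of_ne hji with hlt | hgt
  · rw [hP.face_degen_lt α m j i ρ hj hlt him]
    exact hP.degenerate_degen _ (by omega) (by omega)
  · rw [hP.face_degen_gt α m j i ρ hi hgt hjm]
    exact hP.degenerate_degen _ hi (by omega)

end CubicalConnAxioms

section Boundary

variable (P : PrecubicalConn) (R : Type*) [CommRing R]

noncomputable def bdryTerm (n j : ℕ) (σ : P.K (n + 1)) : P.K n →₀ R :=
  (-1 : R) ^ j • (Finsupp.single (P.face false n j σ) 1 - Finsupp.single (P.face true n j σ) 1)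

theorem bdry_single (n : ℕ) (σ : P.K (n + 1)) :
    bdry P R n (Finsupp.single σ 1) = ∑ j ∈ Finset.Icc 1 (n + 1), bdryTerm P R n j σ := by
  simp [bdry, bdryTerm, Fmap, Finsupp.mapDomain_single]

variable {P R}

theorem bdryTerm_eq_zero {n j : ℕ} {σ : P.K (n + 1)}
    (h : P.face false n j σ = P.face true n j σ) : bdryTerm P R n j σ = 0 := by
  rw [bdryTerm, h, sub_self, smul_zero]

theorem bdryTerm_add_bdryTerm_succ {n j : ℕ} {σ : P.K (n + 1)}
    (h : ∀ α, P.face α n j σ = P.face α n (j + 1) σ) :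
    bdryTerm P R n j σ + bdryTerm P R n (j + 1) σ = 0 := by
  rw [bdryTerm, bdryTerm, h, h, ← add_smul, pow_succ, mul_neg_one, add_neg_cancel, zero_smul]

theorem bdryTerm_mem {n j : ℕ} {σ : P.K (n + 1)} {p : Submodule R (P.K n →₀ R)}
    (h : ∀ α, Finsupp.single (P.face α n j σ) 1 ∈ p) : bdryTerm P R n j σ ∈ p :=
  p.smul_mem _ (p.sub_mem (h false) (h true))

theorem single_mem_connSub_sup_degenSub {n : ℕ} {σ : P.K n}
    (h : P.IsConn σ ∨ P.Degenerate σ) :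
    Finsupp.single σ (1 : R) ∈ connSub P R n ⊔ degenSub P R n :=
  h.elim (fun hc => Submodule.mem_sup_left (Submodule.subset_span ⟨σ, hc, rfl⟩))
    (fun hd => Submodule.mem_sup_right (Submodule.subset_span ⟨σ, hd, rfl⟩))

end Boundary

namespace CubicalConnAxioms

variable {P : PrecubicalConn} (R : Type*) [CommRing R]

theorem bdry_single_conn_mem (hP : CubicalConnAxioms P) (β : Bool) {m i : ℕ} (τ : P.K (m + 1))
    (hi : 1 ≤ i) (him : i ≤ m + 1) :
    bdry P R (m + 1) (Finsupp.single (P.conn β (m + 1) i τ) 1) ∈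
      connSub P R (m + 1) ⊔ degenSub P R (m + 1) := by
  rw [bdry_single]
  refine sum_mem_of_sum_subset_eq_zero (t := {i, i + 1}) ?_ ?_ fun j hj hjt => ?_
  · intro j hj
    simp only [Finset.mem_insert, Finset.mem_singleton] at hj
    simp only [Finset.mem_Icc]
    omega
  · rw [Finset.sum_pair (by omega)]
    exact bdryTerm_add_bdryTerm_succ fun α => hP.face_conn_eq_face_succ_conn α β τ hi him
  · simp only [Finset.mem_Icc, Finset.mem_insert, Finset.mem_singleton, not_or] at hj hjt
    exact bdryTerm_mem fun α => single_mem_connSub_sup_degenSub <| .inl <|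
      hP.isConn_face_conn α β τ hi him hj.1 hj.2 hjt.1 hjt.2

theorem bdry_single_degen_mem (hP : CubicalConnAxioms P) {n i : ℕ} (ρ : P.K n) (hi : 1 ≤ i)
    (hin : i ≤ n + 1) :
    bdry P R n (Finsupp.single (P.degen n i ρ) 1) ∈ connSub P R n ⊔ degenSub P R n := by
  rw [bdry_single]
  refine sum_mem_of_sum_subset_eq_zero (t := {i}) (by simp [hi, hin]) ?_ fun j hj hji => ?_
  · rw [Finset.sum_singleton]
    exact bdryTerm_eq_zero (by rw [hP.face_degen_eq false n i ρ hi hin,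
      hP.face_degen_eq true n i ρ hi hin])
  · simp only [Finset.mem_Icc, Finset.mem_singleton] at hj hji
    obtain ⟨m, rfl⟩ : ∃ m, n = m + 1 := ⟨n - 1, by omega⟩
    exact bdryTerm_mem fun α => single_mem_connSub_sup_degenSub <| .inr <|
      hP.degenerate_face_degen α ρ hi hin hj.1 hj.2 hji

end CubicalConnAxioms

/-- The connections generate a chain subcomplex of the non-degenerate chain complex:
the boundary of a chain in the submodule generated by connection cubes (taken together
with the degenerate cubes, which are killed in the non-degenerate chain complex) again
lies in that submodule. -/
theorem boundary_connSub_subset (P : PrecubicalConn) (hP : CubicalConnAxioms P)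
    (R : Type*) [CommRing R] (n : ℕ) (x : P.K (n + 1) →₀ R)
    (hx : x ∈ connSub P R (n + 1) ⊔ degenSub P R (n + 1)) :
    bdry P R n x ∈ connSub P R n ⊔ degenSub P R n := by
  suffices connSub P R (n + 1) ⊔ degenSub P R (n + 1) ≤
      (connSub P R n ⊔ degenSub P R n).comap (bdry P R n) from this hx
  refine sup_le (Submodule.span_le.2 ?_) (Submodule.span_le.2 ?_)
  · rintro _ ⟨σ, ⟨β, i, τ, hi, hin, rfl⟩, rfl⟩
    obtain ⟨m, rfl⟩ : ∃ m, n = m + 1 := ⟨n - 1, by omega⟩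
    exact hP.bdry_single_conn_mem R β τ hi hin
  · rintro _ ⟨σ, ⟨i, hi, hin, hσ⟩, rfl⟩
    rw [SetLike.mem_coe, Submodule.mem_comap, hσ]
    exact hP.bdry_single_degen_mem R _ hi hin
end

section
/- In a cubical set with connections, for a singular n-cube τ, β ∈ {+,−}, and 2 ≤ t ≤ n: ∂_{n+1} Γ_t^β(τ) + Γ_t^β ∂_n(τ) = Γ_{t-1}^β Σ_{i=1}^{t-1} (-1)^i (f_i^- − f_i^+)(τ) + Γ_t^β Σ_{i=1}^{t} (-1)^i (f_i^- − f_i^+)(τ). -/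
/-!
Writing `d_i = f_i^- - f_i^+`, the identities `f_i Γ_t = Γ_{t-1} f_i` for `i < t` and
`f_i Γ_t = Γ_t f_{i-1}` for `i > t + 1` match the faces of `Γ_t^β τ` with those of the two
right-hand chains, while the two faces `f_t Γ_t τ` and `f_{t+1} Γ_t τ` coincide and cancel in
`∂ Γ_t^β τ`. The identity even holds exactly, not just modulo degenerate cubes.
-/

namespace PrecubicalConn

variable {P : PrecubicalConn} (R : Type*) [CommRing R]

variable (P) in
noncomputable def faceDiff (n i : ℕ) : (P.K (n + 1) →₀ R) →ₗ[R] (P.K n →₀ R) :=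
  Fmap P R false n i - Fmap P R true n i

variable (P) in
noncomputable def truncBdry (n k : ℕ) : (P.K (n + 1) →₀ R) →ₗ[R] (P.K n →₀ R) :=
  ∑ i ∈ Finset.Icc 1 k, ((-1 : R) ^ i) • faceDiff P R n i

lemma bdry_eq_truncBdry (n : ℕ) : bdry P R n = truncBdry P R n (n + 1) := rfl

lemma truncBdry_succ (n k : ℕ) :
    truncBdry P R n (k + 1)
      = truncBdry P R n k + (-1 : R) ^ (k + 1) • faceDiff P R n (k + 1) :=
  Finset.sum_Icc_succ_top (by omega) _

lemma truncBdry_apply (n k : ℕ) (x : P.K (n + 1) →₀ R) :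
    truncBdry P R n k x = ∑ i ∈ Finset.Icc 1 k,
      ((-1 : R) ^ i) • ((Fmap P R false n i - Fmap P R true n i) x) := by
  simp only [truncBdry, faceDiff, LinearMap.coe_sum, LinearMap.coe_smul, Finset.sum_apply,
    Pi.smul_apply, LinearMap.sub_apply]

lemma Gmap_single (β : Bool) (n i : ℕ) (σ : P.K n) :
    Gmap P R β n i (Finsupp.single σ 1) = Finsupp.single (P.conn β n i σ) 1 := by
  simp [Gmap]

lemma faceDiff_comp_Gmap_of_lt (hP : CubicalConnAxioms P) (β : Bool) {n i j : ℕ}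
    (hi : 1 ≤ i) (hij : i < j) (hj : j ≤ n + 1) :
    faceDiff P R (n + 1) i ∘ₗ Gmap P R β (n + 1) j
      = Gmap P R β n (j - 1) ∘ₗ faceDiff P R n i := by
  simp only [faceDiff, Fmap, Gmap, LinearMap.sub_comp, LinearMap.comp_sub,
    ← Finsupp.lmapDomain_comp]
  congr 2 <;> funext σ <;> exact hP.face_conn_lt _ β n i j σ hi hij hj

lemma faceDiff_comp_Gmap_of_gt (hP : CubicalConnAxioms P) (β : Bool) {n i j : ℕ}
    (hj : 1 ≤ j) (hji : j + 1 < i) (hi : i ≤ n + 2) :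
    faceDiff P R (n + 1) i ∘ₗ Gmap P R β (n + 1) j
      = Gmap P R β n j ∘ₗ faceDiff P R n (i - 1) := by
  simp only [faceDiff, Fmap, Gmap, LinearMap.sub_comp, LinearMap.comp_sub,
    ← Finsupp.lmapDomain_comp]
  congr 2 <;> funext σ <;> exact hP.face_conn_gt _ β n i j σ hj hji hi

lemma face_succ_conn (hP : CubicalConnAxioms P) (α β : Bool) {n j : ℕ} (hj : 1 ≤ j)
    (hjn : j ≤ n + 1) (σ : P.K (n + 1)) :
    P.face α (n + 1) (j + 1) (P.conn β (n + 1) j σ)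
      = P.face α (n + 1) j (P.conn β (n + 1) j σ) := by
  by_cases hαβ : α = β
  · subst hαβ
    rw [hP.face_conn_self α (n + 1) (j + 1) j σ hj hjn (Or.inr rfl),
      hP.face_conn_self α (n + 1) j j σ hj hjn (Or.inl rfl)]
  · rw [hP.face_conn_opp α β n (j + 1) j σ hj hjn (Or.inr rfl) hαβ,
      hP.face_conn_opp α β n j j σ hj hjn (Or.inl rfl) hαβ]

lemma faceDiff_succ_comp_Gmap (hP : CubicalConnAxioms P) (β : Bool) {n j : ℕ} (hj : 1 ≤ j)
    (hjn : j ≤ n + 1) :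
    faceDiff P R (n + 1) (j + 1) ∘ₗ Gmap P R β (n + 1) j
      = faceDiff P R (n + 1) j ∘ₗ Gmap P R β (n + 1) j := by
  simp only [faceDiff, Fmap, Gmap, LinearMap.sub_comp, ← Finsupp.lmapDomain_comp]
  congr 2 <;> funext σ <;> exact face_succ_conn hP _ β hj hjn σ

lemma truncBdry_comp_Gmap_of_lt (hP : CubicalConnAxioms P) (β : Bool) {n k t : ℕ}
    (hkt : k < t) (ht : t ≤ n + 1) :
    truncBdry P R (n + 1) k ∘ₗ Gmap P R β (n + 1) t
      = Gmap P R β n (t - 1) ∘ₗ truncBdry P R n k := by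
  induction k with
  | zero => simp [truncBdry]
  | succ k ih =>
    rw [truncBdry_succ, truncBdry_succ, LinearMap.add_comp, LinearMap.comp_add,
      ih (by omega), LinearMap.smul_comp, LinearMap.comp_smul,
      faceDiff_comp_Gmap_of_lt R hP β (by omega) hkt ht]

theorem bdry_comp_Gmap_add_Gmap_comp_bdry (hP : CubicalConnAxioms P) (β : Bool) {n t : ℕ}
    (ht1 : 1 ≤ t) (ht2 : t ≤ n + 1) :
    bdry P R (n + 1) ∘ₗ Gmap P R β (n + 1) t + Gmap P R β n t ∘ₗ bdry P R n
      = Gmap P R β n (t - 1) ∘ₗ truncBdry P R n (t - 1)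
        + Gmap P R β n t ∘ₗ truncBdry P R n t := by
  obtain ⟨s, rfl⟩ : ∃ s, t = s + 1 := ⟨t - 1, by omega⟩
  suffices h : ∀ k, s + 1 ≤ k → k ≤ n + 1 →
      truncBdry P R (n + 1) (k + 1) ∘ₗ Gmap P R β (n + 1) (s + 1)
        + Gmap P R β n (s + 1) ∘ₗ truncBdry P R n k
      = Gmap P R β n s ∘ₗ truncBdry P R n s
        + Gmap P R β n (s + 1) ∘ₗ truncBdry P R n (s + 1)
    by rw [bdry_eq_truncBdry, bdry_eq_truncBdry]; exact h (n + 1) ht2 le_rfl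
  intro k hk
  induction k, hk using Nat.le_induction with
  | base =>
    intro _
    rw [truncBdry_succ, truncBdry_succ, LinearMap.add_comp, LinearMap.add_comp,
      truncBdry_comp_Gmap_of_lt R hP β (Nat.lt_succ_self s) ht2, LinearMap.smul_comp,
      LinearMap.smul_comp, faceDiff_succ_comp_Gmap R hP β (by omega) ht2, truncBdry_succ,
      LinearMap.comp_add, LinearMap.comp_smul]
    simp only [Nat.add_one_sub_one]
    module
  | succ k _ ih =>
    intro hkn
    rw [truncBdry_succ R (n + 1) (k + 1), LinearMap.add_comp, truncBdry_succ R n k,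
      LinearMap.comp_add, LinearMap.smul_comp,
      LinearMap.comp_smul, faceDiff_comp_Gmap_of_gt R hP β (by omega) (by omega) (by omega),
      ← ih (by omega), Nat.add_sub_cancel, pow_succ]
    module

end PrecubicalConn

/-- Corollary 3.3(ii): for `2 ≤ t ≤ n`, in the non-degenerate chain complex,
`∂ Γ_t^β τ + Γ_t^β ∂ τ
  = Γ_{t-1}^β ∑_{i=1}^{t-1} (-1)^i (f_i^- - f_i^+) τ
    + Γ_t^β ∑_{i=1}^{t} (-1)^i (f_i^- - f_i^+) τ`. -/
theorem boundary_conn_add_conn_boundary (P : PrecubicalConn) (hP : CubicalConnAxioms P)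
    (R : Type*) [CommRing R] (n t : ℕ) (β : Bool) (τ : P.K (n + 1))
    (ht1 : 2 ≤ t) (ht2 : t ≤ n + 1) :
    (bdry P R (n + 1) (Finsupp.single (P.conn β (n + 1) t τ) 1)
        + Gmap P R β n t (bdry P R n (Finsupp.single τ 1)))
      - (Gmap P R β n (t - 1) (∑ i ∈ Finset.Icc 1 (t - 1),
            ((-1 : R) ^ i) • ((Fmap P R false n i - Fmap P R true n i) (Finsupp.single τ 1)))
         + Gmap P R β n t (∑ i ∈ Finset.Icc 1 t,
            ((-1 : R) ^ i) • ((Fmap P R false n i - Fmap P R true n i) (Finsupp.single τ 1))))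
      ∈ degenSub P R (n + 1) := by
  have h := LinearMap.congr_fun (PrecubicalConn.bdry_comp_Gmap_add_Gmap_comp_bdry R hP β
    (by omega : 1 ≤ t) ht2) (Finsupp.single τ 1)
  simp only [LinearMap.add_apply, LinearMap.comp_apply,
    PrecubicalConn.Gmap_single, PrecubicalConn.truncBdry_apply] at h
  rw [h, sub_self]
  exact zero_mem _
end

section
/- In a cubical set with connections, for a singular n-cube τ, β ∈ {+,−}, and t ∈ [n]: ∂_{n+1} Σ_{j=1}^{t} (-1)^j Γ_j^β(τ) + Σ_{j=1}^{t} (-1)^j Γ_j^β ∂_n(τ) = (-1)^t Γ_t^β Σ_{j=1}^t (-1)^j (f_j^- − f_j^+)(τ). -/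
/-! With `H_j = Γ_j ∘ ∂^{≤ j}`, where `∂^{≤ j}` (`truncBdry`) keeps only the first `j` terms of the
boundary, the face–connection relations give `∂ Γ_j + Γ_j ∂ = H_{j-1} + H_j`: faces below `j`
produce `H_{j-1}`, the faces `f_j Γ_j` and `f_{j+1} Γ_j` coincide and cancel, and faces above
`j + 1` cancel against the tail of `Γ_j ∂`. Multiplying by `(-1)^j` and summing over `j ≤ t`
telescopes to `(-1)^t H_t`, so the difference is in fact `0`. -/

section

open Finset

variable {P : PrecubicalConn} {R : Type*} [CommRing R]

noncomputable def faceDiff (P : PrecubicalConn) (R : Type*) [CommRing R] (n i : ℕ) :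
    (P.K (n + 1) →₀ R) →ₗ[R] (P.K n →₀ R) :=
  Fmap P R false n i - Fmap P R true n i

noncomputable def truncBdry (P : PrecubicalConn) (R : Type*) [CommRing R] (n j : ℕ) :
    (P.K (n + 1) →₀ R) →ₗ[R] (P.K n →₀ R) :=
  ∑ i ∈ Icc 1 j, (-1 : R) ^ i • faceDiff P R n i

lemma Gmap_single (β : Bool) (n j : ℕ) (σ : P.K n) (r : R) :
    Gmap P R β n j (Finsupp.single σ r) = Finsupp.single (P.conn β n j σ) r :=
  Finsupp.mapDomain_single

lemma Fmap_Gmap_apply (α β : Bool) (n i j : ℕ) (x : P.K (n + 1) →₀ R) :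
    Fmap P R α (n + 1) i (Gmap P R β (n + 1) j x)
      = x.mapDomain fun σ => P.face α (n + 1) i (P.conn β (n + 1) j σ) :=
  (Finsupp.mapDomain_comp ..).symm

lemma Gmap_Fmap_apply (α β : Bool) (n i j : ℕ) (x : P.K (n + 1) →₀ R) :
    Gmap P R β n j (Fmap P R α n i x) = x.mapDomain fun σ => P.conn β n j (P.face α n i σ) :=
  (Finsupp.mapDomain_comp ..).symm

lemma bdry_eq_truncBdry (n : ℕ) : bdry P R n = truncBdry P R n (n + 1) := rfl

lemma truncBdry_zero (n : ℕ) : truncBdry P R n 0 = 0 := by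
  simp [truncBdry]

lemma truncBdry_succ (n j : ℕ) :
    truncBdry P R n (j + 1) = truncBdry P R n j + (-1 : R) ^ (j + 1) • faceDiff P R n (j + 1) :=
  sum_Icc_succ_top (by omega) _

lemma truncBdry_eq_add_sum_Ioc (n : ℕ) {j m : ℕ} (hjm : j ≤ m) :
    truncBdry P R n m = truncBdry P R n j + ∑ i ∈ Ioc j m, (-1 : R) ^ i • faceDiff P R n i := by
  have hIcc : ∀ m, Icc 1 m = Ioc 0 m := Finset.Icc_add_one_left_eq_Ioc 0
  simp only [truncBdry, hIcc]
  exact (sum_Ioc_consecutive _ (Nat.zero_le j) hjm).symm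

section

variable (hP : CubicalConnAxioms P) (β : Bool)
include hP

lemma faceDiff_Gmap_of_lt {n i j : ℕ} (hi : 1 ≤ i) (hij : i < j) (hj : j ≤ n + 1)
    (x : P.K (n + 1) →₀ R) :
    faceDiff P R (n + 1) i (Gmap P R β (n + 1) j x)
      = Gmap P R β n (j - 1) (faceDiff P R n i x) := by
  simp only [faceDiff, LinearMap.sub_apply, map_sub, Fmap_Gmap_apply, Gmap_Fmap_apply,
    fun α σ => hP.face_conn_lt α β n i j σ hi hij hj]

lemma faceDiff_Gmap_of_gt {n i j : ℕ} (hj : 1 ≤ j) (hji : j + 1 < i) (hi : i ≤ n + 2)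
    (x : P.K (n + 1) →₀ R) :
    faceDiff P R (n + 1) i (Gmap P R β (n + 1) j x)
      = Gmap P R β n j (faceDiff P R n (i - 1) x) := by
  simp only [faceDiff, LinearMap.sub_apply, map_sub, Fmap_Gmap_apply, Gmap_Fmap_apply,
    fun α σ => hP.face_conn_gt α β n i j σ hj hji hi]

lemma face_conn_self_eq_face_conn_succ (α : Bool) {n j : ℕ} (hj : 1 ≤ j) (hjn : j ≤ n + 1)
    (σ : P.K (n + 1)) :
    P.face α (n + 1) j (P.conn β (n + 1) j σ)
      = P.face α (n + 1) (j + 1) (P.conn β (n + 1) j σ) := by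
  by_cases hαβ : α = β
  · subst hαβ
    rw [hP.face_conn_self α (n + 1) j j σ hj hjn (.inl rfl),
      hP.face_conn_self α (n + 1) (j + 1) j σ hj hjn (.inr rfl)]
  · rw [hP.face_conn_opp α β n j j σ hj hjn (.inl rfl) hαβ,
      hP.face_conn_opp α β n (j + 1) j σ hj hjn (.inr rfl) hαβ]

lemma faceDiff_Gmap_self {n j : ℕ} (hj : 1 ≤ j) (hjn : j ≤ n + 1) (x : P.K (n + 1) →₀ R) :
    faceDiff P R (n + 1) j (Gmap P R β (n + 1) j x)
      = faceDiff P R (n + 1) (j + 1) (Gmap P R β (n + 1) j x) := by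
  simp only [faceDiff, LinearMap.sub_apply, Fmap_Gmap_apply,
    face_conn_self_eq_face_conn_succ hP β _ hj hjn]

lemma truncBdry_Gmap_succ {n k : ℕ} (hk : k ≤ n) (x : P.K (n + 1) →₀ R) :
    truncBdry P R (n + 1) k (Gmap P R β (n + 1) (k + 1) x)
      = Gmap P R β n k (truncBdry P R n k x) := by
  simp only [truncBdry, LinearMap.sum_apply, LinearMap.smul_apply, map_sum, map_smul]
  refine sum_congr rfl fun i hi => ?_
  rw [mem_Icc] at hi
  rw [faceDiff_Gmap_of_lt hP β hi.1 (by omega) (by omega), Nat.add_sub_cancel]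

lemma sum_Ioc_faceDiff_Gmap {n k : ℕ} (x : P.K (n + 1) →₀ R) :
    ∑ i ∈ Ioc (k + 2) (n + 2),
        (-1 : R) ^ i • faceDiff P R (n + 1) i (Gmap P R β (n + 1) (k + 1) x)
      = -Gmap P R β n (k + 1) (∑ i ∈ Ioc (k + 1) (n + 1), (-1 : R) ^ i • faceDiff P R n i x) := by
  rw [← map_add_right_Ioc (k + 1) (n + 1) 1, sum_map, map_sum, ← sum_neg_distrib]
  refine sum_congr rfl fun i hi => ?_
  rw [mem_Ioc] at hi
  rw [addRightEmbedding_apply, faceDiff_Gmap_of_gt hP β (by omega) (by omega) (by omega),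
    Nat.add_sub_cancel, map_smul, pow_succ, mul_neg_one, neg_smul]

theorem bdry_Gmap_add_Gmap_bdry {n k : ℕ} (hk : k ≤ n) (x : P.K (n + 1) →₀ R) :
    bdry P R (n + 1) (Gmap P R β (n + 1) (k + 1) x) + Gmap P R β n (k + 1) (bdry P R n x)
      = Gmap P R β n k (truncBdry P R n k x)
        + Gmap P R β n (k + 1) (truncBdry P R n (k + 1) x) := by
  rw [bdry_eq_truncBdry, bdry_eq_truncBdry,
    truncBdry_eq_add_sum_Ioc (n + 1) (by omega : k + 2 ≤ n + 2), truncBdry_succ, truncBdry_succ,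
    truncBdry_eq_add_sum_Ioc n (by omega : k + 1 ≤ n + 1)]
  simp only [LinearMap.add_apply, LinearMap.smul_apply, LinearMap.sum_apply, map_add,
    truncBdry_Gmap_succ hP β hk, sum_Ioc_faceDiff_Gmap hP β,
    faceDiff_Gmap_self hP β (by omega : 1 ≤ k + 1) (by omega : k + 1 ≤ n + 1)]
  rw [pow_succ _ (k + 1)]
  module

theorem sum_bdry_Gmap_add_Gmap_bdry {n t : ℕ} (ht : t ≤ n + 1) (x : P.K (n + 1) →₀ R) :
    ∑ j ∈ Icc 1 t, (-1 : R) ^ j •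
        (bdry P R (n + 1) (Gmap P R β (n + 1) j x) + Gmap P R β n j (bdry P R n x))
      = (-1 : R) ^ t • Gmap P R β n t (truncBdry P R n t x) := by
  induction t with
  | zero => simp [truncBdry_zero]
  | succ t ih =>
    rw [sum_Icc_succ_top (by omega), ih (by omega), bdry_Gmap_add_Gmap_bdry hP β (by omega),
      pow_succ]
    module

end

end

theorem alternating_conn_sum_identity_general (P : PrecubicalConn) (hP : CubicalConnAxioms P)
    (R : Type*) [CommRing R] (n t : ℕ) (β : Bool) (τ : P.K (n + 1))
    (ht2 : t ≤ n + 1) :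
    (bdry P R (n + 1) (∑ j ∈ Finset.Icc 1 t,
          ((-1 : R) ^ j) • Finsupp.single (P.conn β (n + 1) j τ) 1)
        + ∑ j ∈ Finset.Icc 1 t,
          ((-1 : R) ^ j) • Gmap P R β n j (bdry P R n (Finsupp.single τ 1)))
      - ((-1 : R) ^ t • Gmap P R β n t (∑ j ∈ Finset.Icc 1 t,
          ((-1 : R) ^ j) • ((Fmap P R false n j - Fmap P R true n j) (Finsupp.single τ 1))))
      ∈ degenSub P R (n + 1) := by
  convert zero_mem (degenSub P R (n + 1))
  rw [sub_eq_zero]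
  convert sum_bdry_Gmap_add_Gmap_bdry hP β ht2 (Finsupp.single τ (1 : R)) using 1
  · simp only [smul_add, Finset.sum_add_distrib, map_sum, map_smul, Gmap_single]
  · simp only [truncBdry, LinearMap.sum_apply, LinearMap.smul_apply]
    rfl

/-- Corollary 3.3(iii): for `t ∈ [n]`, in the non-degenerate chain complex,
`∂ ∑_{j=1}^{t} (-1)^j Γ_j^β τ + ∑_{j=1}^{t} (-1)^j Γ_j^β ∂ τ
  = (-1)^t Γ_t^β ∑_{j=1}^{t} (-1)^j (f_j^- - f_j^+) τ`. -/
theorem alternating_conn_sum_identity (P : PrecubicalConn) (hP : CubicalConnAxioms P)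
    (R : Type*) [CommRing R] (n t : ℕ) (β : Bool) (τ : P.K (n + 1))
    (ht1 : 1 ≤ t) (ht2 : t ≤ n + 1) :
    (bdry P R (n + 1) (∑ j ∈ Finset.Icc 1 t,
          ((-1 : R) ^ j) • Finsupp.single (P.conn β (n + 1) j τ) 1)
        + ∑ j ∈ Finset.Icc 1 t,
          ((-1 : R) ^ j) • Gmap P R β n j (bdry P R n (Finsupp.single τ 1)))
      - ((-1 : R) ^ t • Gmap P R β n t (∑ j ∈ Finset.Icc 1 t,
          ((-1 : R) ^ j) • ((Fmap P R false n j - Fmap P R true n j) (Finsupp.single τ 1))))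
      ∈ degenSub P R (n + 1) :=
  alternating_conn_sum_identity_general P hP R n t β τ ht2
end
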